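/- Let M ≥ 1 and 1 ≤ n ≤ M. Let Q₀^{(j)}, Q₁^{(j)} (0 ≤ j ≤ M−1) be positive integers and E ≥ 0 an integer. Define E^{(0)} = E and, for j = 1, 2, …, M: E^{(j)} = E^{(j−1)} + Q₀^{(M−j)} − min(E^{(j−1)}, Q₁^{(M−j)}), Q̃₀^{(M−j)} = Q₁^{(M−j)} + Q₀^{(M−j)} − min(E^{(j−1)}, Q₁^{(M−j)}), and Q̃₁^{(M−j)} = min(E^{(j−1)}, Q₁^{(M−j)}). Then max_{1≤k≤n} ( Σ_{i=0}^{k−1} Q₀^{(i)} + Σ_{j=k−1}^{n−1} Q₁^{(j)} ) = max_{1≤k≤n} ( Σ_{i=0}^{k−1} Q̃₀^{(i)} + Σ_{j=k−1}^{n−1} Q̃₁^{(j)} ); that is, the piecewise-linear Schensted row lengths η_n are invariant under the ultradiscrete birational transformation. -/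

import Mathlib

/-!
Write `b i = min(E_i, Q₁⁽ⁱ⁾)`, where `E_i = E^{(M-i-1)}` is the carrier entering site `i`, and
put `ψ i = Q₁⁽ⁱ⁾ - b i ≥ 0`, `φ i = E_i - b i ≥ 0`; since `b i` is one of the two arguments of the
min, `ψ i = 0` or `φ i = 0`. Telescoping the carrier recursion turns the `k`-th candidate of
`η_n` into `D - (∑_{i<k-1} ψ i + φ (k-1))` before the transformation and into
`D - (∑_{k≤i<n} ψ i + φ (k-1))` after it, with `D = E^{(M)} + ∑_{i<n} Q₁⁽ⁱ⁾`. If `ψ` vanishes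
below `n` the two families agree termwise; otherwise both maxima equal `D`, attained at the first,
respectively the last, site below `n` where `ψ` is nonzero.
-/

open Finset

/-- `uE M Q0 Q1 E j = E^{(j)}`: the ultradiscrete carrier recursion
`E^{(0)} = E`, `E^{(j)} = E^{(j-1)} + Q0^{(M-j)} - min(E^{(j-1)}, Q1^{(M-j)})`. -/
def uE (M : ℕ) (Q0 Q1 : ℕ → ℤ) (E : ℤ) : ℕ → ℤ
  | 0 => E
  | j + 1 => uE M Q0 Q1 E j + Q0 (M - j - 1) - min (uE M Q0 Q1 E j) (Q1 (M - j - 1))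

section Complementary

variable {A B : Type*} [AddCommMonoid A] [Zero B] {ψ : ℕ → A} {φ : ℕ → B} {n : ℕ}

theorem exists_sum_range_eq_zero_and_eq_zero (hcompl : ∀ i, ψ i = 0 ∨ φ i = 0)
    (h : ∃ i < n, ψ i ≠ 0) : ∃ t < n, ∑ i ∈ range t, ψ i = 0 ∧ φ t = 0 := by
  classical
  obtain ⟨i, hin, hi⟩ := h
  obtain ⟨s, hs, hmin⟩ := ((range n).filter (ψ · ≠ 0)).exists_min_image id ⟨i, by simp [hin, hi]⟩
  rw [mem_filter, mem_range] at hs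
  refine ⟨s, hs.1, sum_eq_zero fun j hj => ?_, (hcompl s).resolve_left hs.2⟩
  rw [mem_range] at hj
  by_contra hψj
  exact absurd (hmin j (by simp [hj.trans hs.1, hψj])) (not_le.2 hj)

theorem exists_sum_Ico_eq_zero_and_eq_zero (hcompl : ∀ i, ψ i = 0 ∨ φ i = 0)
    (h : ∃ i < n, ψ i ≠ 0) : ∃ t < n, ∑ i ∈ Ico (t + 1) n, ψ i = 0 ∧ φ t = 0 := by
  classical
  obtain ⟨i, hin, hi⟩ := h
  obtain ⟨s, hs, hmax⟩ := ((range n).filter (ψ · ≠ 0)).exists_max_image id ⟨i, by simp [hin, hi]⟩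
  rw [mem_filter, mem_range] at hs
  refine ⟨s, hs.1, sum_eq_zero fun j hj => ?_, (hcompl s).resolve_left hs.2⟩
  rw [mem_Ico] at hj
  by_contra hψj
  exact absurd (hmax j (by simp [hj.2, hψj])) (not_le.2 hj.1)

end Complementary

theorem sup'_eq_of_forall_le_of_mem {ι α : Type*} [SemilatticeSup α] {s : Finset ι}
    (hs : s.Nonempty) {f : ι → α} {a : α} (hle : ∀ i ∈ s, f i ≤ a) {i : ι} (hi : i ∈ s)
    (hfi : f i = a) : s.sup' hs f = a :=
  le_antisymm (sup'_le hs f hle) (hfi ▸ le_sup' f hi)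

theorem sup'_sub_sum_range_eq_sup'_sub_sum_Ico {α : Type*} [AddCommGroup α] [LinearOrder α]
    [IsOrderedAddMonoid α] (D : α) {ψ φ : ℕ → α} (hψ : ∀ i, 0 ≤ ψ i) (hφ : ∀ i, 0 ≤ φ i)
    (hcompl : ∀ i, ψ i = 0 ∨ φ i = 0) {n : ℕ} (hn : 1 ≤ n) :
    (Icc 1 n).sup' (nonempty_Icc.mpr hn) (fun k => D - (∑ i ∈ range (k - 1), ψ i + φ (k - 1)))
      = (Icc 1 n).sup' (nonempty_Icc.mpr hn)
          (fun k => D - (∑ i ∈ Ico k n, ψ i + φ (k - 1))) := by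
  by_cases h : ∃ i < n, ψ i ≠ 0
  · have hle : ∀ (S : ℕ → Finset ℕ) k, D - (∑ i ∈ S k, ψ i + φ (k - 1)) ≤ D := fun S k =>
      sub_le_self D (add_nonneg (sum_nonneg fun i _ => hψ i) (hφ _))
    obtain ⟨t, htn, hsum, hφt⟩ := exists_sum_range_eq_zero_and_eq_zero hcompl h
    obtain ⟨t', ht'n, hsum', hφt'⟩ := exists_sum_Ico_eq_zero_and_eq_zero hcompl h
    rw [sup'_eq_of_forall_le_of_mem _ (fun k _ => hle (fun k => range (k - 1)) k)
        (i := t + 1) (mem_Icc.2 ⟨by omega, by omega⟩) (by simp [hsum, hφt]),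
      sup'_eq_of_forall_le_of_mem _ (fun k _ => hle (Ico · n) k)
        (i := t' + 1) (mem_Icc.2 ⟨by omega, by omega⟩) (by simp [hsum', hφt'])]
  · push Not at h
    refine sup'_congr _ rfl fun k hk => ?_
    rw [mem_Icc] at hk
    rw [sum_eq_zero fun i hi => h i (by have := mem_range.1 hi; omega),
      sum_eq_zero fun i hi => h i (mem_Ico.1 hi).2]

section Toda

variable (M : ℕ) (Q0 Q1 : ℕ → ℤ) (E : ℤ)

def uQt1 (i : ℕ) : ℤ := min (uE M Q0 Q1 E (M - i - 1)) (Q1 i)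

def uQt0 (i : ℕ) : ℤ := Q1 i + Q0 i - uQt1 M Q0 Q1 E i

theorem uE_sub {i : ℕ} (hi : i < M) :
    uE M Q0 Q1 E (M - i) = uE M Q0 Q1 E (M - i - 1) + Q0 i - uQt1 M Q0 Q1 E i := by
  obtain ⟨j, hj⟩ : ∃ j, M - i = j + 1 := ⟨M - i - 1, by omega⟩
  have hij : M - j - 1 = i := by omega
  rw [hj, uE, hij, uQt1, hj, Nat.add_sub_cancel]

theorem sum_range_sub_uQt1 {k : ℕ} (hk : k ≤ M) :
    ∑ i ∈ range k, (Q0 i - uQt1 M Q0 Q1 E i) = uE M Q0 Q1 E M - uE M Q0 Q1 E (M - k) := by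
  have htele := sum_range_sub' (fun i => uE M Q0 Q1 E (M - i)) k
  rw [Nat.sub_zero] at htele
  rw [← htele]
  refine sum_congr rfl fun i hi => ?_
  rw [uE_sub M Q0 Q1 E ((mem_range.1 hi).trans_le hk), Nat.sub_sub]
  ring

variable {M} {n : ℕ}

theorem sum_range_Q0_add_sum_Ico_Q1 (hnM : n ≤ M) {t : ℕ} (htn : t < n) :
    ∑ i ∈ range (t + 1), Q0 i + ∑ j ∈ Ico t n, Q1 j
      = (uE M Q0 Q1 E M + ∑ i ∈ range n, Q1 i)
        - (∑ i ∈ range t, (Q1 i - uQt1 M Q0 Q1 E i)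
          + (uE M Q0 Q1 E (M - t - 1) - uQt1 M Q0 Q1 E t)) := by
  have htele := sum_range_sub_uQt1 M Q0 Q1 E (k := t + 1) (by omega)
  have hsplit := sum_range_add_sum_Ico Q1 htn.le
  rw [sum_sub_distrib, sum_range_succ (uQt1 M Q0 Q1 E), ← Nat.sub_sub] at htele
  rw [sum_sub_distrib]
  linear_combination htele + hsplit

theorem sum_range_uQt0_add_sum_Ico_uQt1 (hnM : n ≤ M) {t : ℕ} (htn : t < n) :
    ∑ i ∈ range (t + 1), uQt0 M Q0 Q1 E i + ∑ j ∈ Ico t n, uQt1 M Q0 Q1 E j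
      = (uE M Q0 Q1 E M + ∑ i ∈ range n, Q1 i)
        - (∑ i ∈ Ico (t + 1) n, (Q1 i - uQt1 M Q0 Q1 E i)
          + (uE M Q0 Q1 E (M - t - 1) - uQt1 M Q0 Q1 E t)) := by
  have htele := sum_range_sub_uQt1 M Q0 Q1 E (k := t + 1) (by omega)
  have hsplit := sum_range_add_sum_Ico Q1 (show t + 1 ≤ n by omega)
  rw [sum_sub_distrib, ← Nat.sub_sub] at htele
  simp only [uQt0, add_sub_assoc, sum_add_distrib, sum_sub_distrib]
  rw [sum_eq_sum_Ico_succ_bot htn]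
  linear_combination htele + hsplit

end Toda

theorem stmt_13_general (M : ℕ) (Q0 Q1 : ℕ → ℤ) (E : ℤ) :
    let Qt0 : ℕ → ℤ := fun s => Q1 s + Q0 s - min (uE M Q0 Q1 E (M - s - 1)) (Q1 s)
    let Qt1 : ℕ → ℤ := fun s => min (uE M Q0 Q1 E (M - s - 1)) (Q1 s)
    ∀ n, ∀ hn : 1 ≤ n, n ≤ M →
      ((Finset.Icc 1 n).sup' (Finset.nonempty_Icc.mpr hn) fun k =>
          (∑ i ∈ Finset.range k, Q0 i) + ∑ j ∈ Finset.Ico (k - 1) n, Q1 j)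
        = ((Finset.Icc 1 n).sup' (Finset.nonempty_Icc.mpr hn) fun k =>
          (∑ i ∈ Finset.range k, Qt0 i) + ∑ j ∈ Finset.Ico (k - 1) n, Qt1 j) := by
  intro Qt0 Qt1 n hn hnM
  set ψ : ℕ → ℤ := fun i => Q1 i - uQt1 M Q0 Q1 E i
  set φ : ℕ → ℤ := fun i => uE M Q0 Q1 E (M - i - 1) - uQt1 M Q0 Q1 E i
  have hψ : ∀ i, 0 ≤ ψ i := fun i => sub_nonneg.2 (min_le_right _ _)
  have hφ : ∀ i, 0 ≤ φ i := fun i => sub_nonneg.2 (min_le_left _ _)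
  have hcompl : ∀ i, ψ i = 0 ∨ φ i = 0 := fun i =>
    (min_choice (uE M Q0 Q1 E (M - i - 1)) (Q1 i)).symm.imp
      (fun h => sub_eq_zero.2 h.symm) (fun h => sub_eq_zero.2 h.symm)
  have hpred : ∀ k ∈ Icc 1 n, ∃ t < n, k = t + 1 := fun k hk =>
    ⟨k - 1, by have := mem_Icc.1 hk; omega⟩
  set D : ℤ := uE M Q0 Q1 E M + ∑ i ∈ range n, Q1 i
  calc _ = (Icc 1 n).sup' (nonempty_Icc.mpr hn)
          (fun k => D - (∑ i ∈ range (k - 1), ψ i + φ (k - 1))) :=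
        sup'_congr _ rfl fun k hk => by
          obtain ⟨t, htn, rfl⟩ := hpred k hk
          exact sum_range_Q0_add_sum_Ico_Q1 Q0 Q1 E hnM htn
    _ = (Icc 1 n).sup' (nonempty_Icc.mpr hn)
          (fun k => D - (∑ i ∈ Ico k n, ψ i + φ (k - 1))) :=
        sup'_sub_sum_range_eq_sup'_sub_sum_Ico _ hψ hφ hcompl hn
    _ = _ := sup'_congr _ rfl fun k hk => by
          obtain ⟨t, htn, rfl⟩ := hpred k hk
          exact (sum_range_uQt0_add_sum_Ico_uQt1 Q0 Q1 E hnM htn).symm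

/-- the piecewise-linear Schensted row lengths `η_n` are invariant under the
ultradiscrete birational transformation
`Q̃0^{(M-j)} = Q1^{(M-j)} + Q0^{(M-j)} - min(E^{(j-1)}, Q1^{(M-j)})`,
`Q̃1^{(M-j)} = min(E^{(j-1)}, Q1^{(M-j)})`. -/
theorem stmt_13 (M : ℕ) (hM : 1 ≤ M) (Q0 Q1 : ℕ → ℤ) (E : ℤ)
    (hQ0 : ∀ j < M, 0 < Q0 j) (hQ1 : ∀ j < M, 0 < Q1 j) (hE : 0 ≤ E) :
    let Qt0 : ℕ → ℤ := fun s => Q1 s + Q0 s - min (uE M Q0 Q1 E (M - s - 1)) (Q1 s)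
    let Qt1 : ℕ → ℤ := fun s => min (uE M Q0 Q1 E (M - s - 1)) (Q1 s)
    ∀ n, ∀ hn : 1 ≤ n, n ≤ M →
      ((Finset.Icc 1 n).sup' (Finset.nonempty_Icc.mpr hn) fun k =>
          (∑ i ∈ Finset.range k, Q0 i) + ∑ j ∈ Finset.Ico (k - 1) n, Q1 j)
        = ((Finset.Icc 1 n).sup' (Finset.nonempty_Icc.mpr hn) fun k =>
          (∑ i ∈ Finset.range k, Qt0 i) + ∑ j ∈ Finset.Ico (k - 1) n, Qt1 j) :=
  stmt_13_general M Q0 Q1 E
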